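/- arXiv:cs/0703141 — 4 statements merged into one kernel-verified Lean document; each statement's English description precedes it below -/
import Mathlib

section
/- Let T be an n×n invertible matrix over 𝔽_q such that the set {0, I, T, T², …, T^(q^n−2)} is closed under addition and multiplication and T has multiplicative order q^n − 1. Then for every nonzero y ∈ 𝔽_q^n, the vectors y·T^i for i = 0, 1, …, q^n − 2 are pairwise distinct. -/
/-- Let `T` be an `n×n` invertible matrix over `𝔽_q` such that the set
`{0, I, T, T², …, T^(q^n−2)}` is closed under addition and multiplication and `T` has
multiplicative order `q^n − 1`. Then for every nonzero `y ∈ 𝔽_q^n`, the vectors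
`y · T^i` for `i = 0, 1, …, q^n − 2` are pairwise distinct. -/
theorem vecMul_pow_injective_of_balanced_matrix {F : Type*} [Field F] [Fintype F] {n : ℕ}
    (hn : 0 < n) (T : Matrix (Fin n) (Fin n) F) (hT : IsUnit T)
    (hord : orderOf T = Fintype.card F ^ n - 1)
    (hclosed : ∀ A ∈ ({0} ∪ {M | ∃ i < Fintype.card F ^ n - 1, M = T ^ i} :
        Set (Matrix (Fin n) (Fin n) F)),
      ∀ B ∈ ({0} ∪ {M | ∃ i < Fintype.card F ^ n - 1, M = T ^ i} :
        Set (Matrix (Fin n) (Fin n) F)),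
      A + B ∈ ({0} ∪ {M | ∃ i < Fintype.card F ^ n - 1, M = T ^ i} :
        Set (Matrix (Fin n) (Fin n) F)) ∧
      A * B ∈ ({0} ∪ {M | ∃ i < Fintype.card F ^ n - 1, M = T ^ i} :
        Set (Matrix (Fin n) (Fin n) F))) :
    ∀ y : Fin n → F, y ≠ 0 →
      ∀ i < Fintype.card F ^ n - 1, ∀ j < Fintype.card F ^ n - 1,
        Matrix.vecMul y (T ^ i) = Matrix.vecMul y (T ^ j) → i = j := by
  set S : Set (Matrix (Fin n) (Fin n) F) :=
    {0} ∪ {M | ∃ i < Fintype.card F ^ n - 1, M = T ^ i} with hS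
  have h0 : (0 : Matrix (Fin n) (Fin n) F) ∈ S := Or.inl rfl
  have hordpos : 0 < orderOf T := by
    rw [hord]
    have h2 : 2 ≤ Fintype.card F := Fintype.one_lt_card
    have : 2 ≤ Fintype.card F ^ n := le_trans h2 (Nat.le_self_pow hn.ne' _)
    omega
  have hTmem : ∀ i : ℕ, T ^ i ∈ S := by
    intro i
    refine Or.inr ⟨i % orderOf T, ?_, (pow_mod_orderOf T i).symm⟩
    rw [← hord]; exact Nat.mod_lt _ hordpos
  have hadd : ∀ A ∈ S, ∀ B ∈ S, A + B ∈ S := fun A hA B hB => (hclosed A hA B hB).1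
  have hsmul : ∀ (k : ℕ), ∀ A ∈ S, (k • A) ∈ S := by
    intro k
    induction k with
    | zero => intro A _; simpa using h0
    | succ m ih =>
        intro A hA
        rw [succ_nsmul]
        exact hadd _ (ih A hA) _ hA
  have hneg : ∀ A ∈ S, -A ∈ S := by
    intro A hA
    have hp : (ringChar F : ℕ) • A = 0 := by
      ext i j
      simp [nsmul_eq_mul, CharP.cast_eq_zero F (ringChar F)]
    have hppos : 0 < ringChar F := (CharP.char_is_prime F (ringChar F)).pos
    have key : (ringChar F - 1) • A = -A := by
      rw [← Nat.succ_pred_eq_of_pos hppos, succ_nsmul] at hp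
      simpa [Nat.pred_eq_sub_one] using eq_neg_of_add_eq_zero_left hp
    rw [← key]
    exact hsmul _ A hA
  intro y hy i hi j hj heq
  by_contra hij
  -- T ^ i ≠ T ^ j
  have hne : T ^ i ≠ T ^ j := by
    intro h
    obtain ⟨u, hu⟩ := hT
    have hui : (u ^ i : Matrix (Fin n) (Fin n) F) = T ^ i := by rw [hu]
    have huj : (u ^ j : Matrix (Fin n) (Fin n) F) = T ^ j := by rw [hu]
    have : (u ^ i : (Matrix (Fin n) (Fin n) F)ˣ) = u ^ j := by
      apply Units.ext
      rw [Units.val_pow_eq_pow_val, Units.val_pow_eq_pow_val, hu, h]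
    have hordu : orderOf u = Fintype.card F ^ n - 1 := by
      rw [← hord, ← hu, orderOf_units]
    exact hij (pow_injOn_Iio_orderOf (by rw [hordu]; exact hi)
      (by rw [hordu]; exact hj) this)
  -- T^i - T^j ∈ S and nonzero
  have hmem : T ^ i - T ^ j ∈ S := by
    rw [sub_eq_add_neg]
    exact hadd _ (hTmem i) _ (hneg _ (hTmem j))
  have hnz : T ^ i - T ^ j ≠ 0 := sub_ne_zero.mpr hne
  obtain ⟨l, _, hl⟩ : ∃ l < Fintype.card F ^ n - 1, T ^ i - T ^ j = T ^ l := by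
    rcases hmem with h | h
    · exact absurd h hnz
    · exact h
  have hyl : Matrix.vecMul y (T ^ l) = 0 := by
    rw [← hl, Matrix.vecMul_sub, heq, sub_self]
  have hul : IsUnit (T ^ l) := hT.pow l
  apply hy
  have hdet : IsUnit (T ^ l).det := (Matrix.isUnit_iff_isUnit_det _).mp hul
  have := Matrix.vecMul_vecMul y (T ^ l) (T ^ l)⁻¹
  rw [Matrix.mul_nonsing_inv _ hdet, Matrix.vecMul_one, hyl, Matrix.zero_vecMul] at this
  exact this.symm
end

section
/- Let T be an n×n invertible matrix over 𝔽_q of multiplicative order q^n − 1 such that {0, I, T, …, T^(q^n−2)} is closed under addition and multiplication. Fix 1 ≤ k₁ ≤ n and let C₁^(i) = {x T^i|^{k₁} : x ∈ 𝔽_q^{k₁}} be the row space of the first k₁ rows of T^i. Then the ensemble {C₁^(i)}_{i=0}^{q^n−2} is balanced: every nonzero word of 𝔽_q^n lies in exactly q^{k₁} − 1 of the codes C₁^(i) (counted with multiplicity over i). -/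
/-- `C₁^(i)`: the words `y ᵥ* T^i` where `y` is supported on the first `k₁` coordinates,
i.e. the row space of the first `k₁` rows of `T^i`. -/
def innerCode {F : Type*} [Field F] {n : ℕ} (T : Matrix (Fin n) (Fin n) F)
    (k₁ : ℕ) (i : ℕ) : Set (Fin n → F) :=
  {x | ∃ y : Fin n → F, (∀ j : Fin n, k₁ ≤ (j : ℕ) → y j = 0) ∧ x = Matrix.vecMul y (T ^ i)}

/-- With `T` as before and `1 ≤ k₁ ≤ n`, the ensemble
`{C₁^(i)}_{i=0}^{q^n−2}` is balanced: every nonzero word of `𝔽_q^n` lies in exactly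
`q^{k₁} − 1` of the codes `C₁^(i)` (counted with multiplicity over `i`). -/
theorem innerCode_ensemble_balanced {F : Type*} [Field F] [Fintype F] [DecidableEq F]
    {n k₁ : ℕ} (hk₁ : 1 ≤ k₁) (hk₁n : k₁ ≤ n)
    (T : Matrix (Fin n) (Fin n) F) (hT : IsUnit T)
    (hord : orderOf T = Fintype.card F ^ n - 1)
    (hclosed : ∀ A ∈ ({0} ∪ {M | ∃ i < Fintype.card F ^ n - 1, M = T ^ i} :
        Set (Matrix (Fin n) (Fin n) F)),
      ∀ B ∈ ({0} ∪ {M | ∃ i < Fintype.card F ^ n - 1, M = T ^ i} :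
        Set (Matrix (Fin n) (Fin n) F)),
      A + B ∈ ({0} ∪ {M | ∃ i < Fintype.card F ^ n - 1, M = T ^ i} :
        Set (Matrix (Fin n) (Fin n) F)) ∧
      A * B ∈ ({0} ∪ {M | ∃ i < Fintype.card F ^ n - 1, M = T ^ i} :
        Set (Matrix (Fin n) (Fin n) F))) :
    ∀ x : Fin n → F, x ≠ 0 →
      Nat.card {i : ℕ // i < Fintype.card F ^ n - 1 ∧ x ∈ innerCode T k₁ i} =
        Fintype.card F ^ k₁ - 1 := by
  classical
  intro x hx
  set q := Fintype.card F with hq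
  set N := q ^ n - 1 with hNdef
  have hn : 0 < n := lt_of_lt_of_le hk₁ hk₁n
  have hq2 : 2 ≤ q := Fintype.one_lt_card
  have hqn2 : 2 ≤ q ^ n := le_trans hq2 (Nat.le_self_pow hn.ne' q)
  have hN0 : 0 < N := by omega
  have hTN : T ^ N = 1 := by rw [← hord]; exact pow_orderOf_eq_one T
  have hone : (1 : Matrix (Fin n) (Fin n) F) ≠ 0 := by
    intro h
    have h2 := congrFun (congrFun h ⟨0, hn⟩) ⟨0, hn⟩
    simp [Matrix.one_apply] at h2
  have hpow_ne : ∀ i : ℕ, T ^ i ≠ 0 := by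
    intro i h
    obtain ⟨u, hu⟩ := hT.pow i
    have h2 : (u : Matrix (Fin n) (Fin n) F) * (↑(u⁻¹) : Matrix (Fin n) (Fin n) F) = 1 :=
      u.mul_inv
    rw [hu, h, zero_mul] at h2
    exact hone h2.symm
  have hvecMul_unit : ∀ (w : Fin n → F) (i : ℕ), Matrix.vecMul w (T ^ i) = 0 → w = 0 := by
    intro w i hw
    obtain ⟨u, hu⟩ := hT.pow i
    have hmul : (T ^ i) * ((u⁻¹ : (Matrix (Fin n) (Fin n) F)ˣ) :
        Matrix (Fin n) (Fin n) F) = 1 := by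
      rw [← hu]; exact u.mul_inv
    have h2 : Matrix.vecMul (Matrix.vecMul w (T ^ i))
        ((u⁻¹ : (Matrix (Fin n) (Fin n) F)ˣ) : Matrix (Fin n) (Fin n) F) = w := by
      rw [Matrix.vecMul_vecMul, hmul, Matrix.vecMul_one]
    rw [hw, Matrix.zero_vecMul] at h2
    exact h2.symm
  set Sfin : Finset (Matrix (Fin n) (Fin n) F) :=
    insert 0 ((Finset.range N).image fun i => T ^ i) with hSfin
  have hmem : ∀ A, A ∈ Sfin ↔ A = 0 ∨ ∃ i < N, A = T ^ i := by
    intro A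
    constructor
    · intro h
      rcases Finset.mem_insert.mp h with h | h
      · exact Or.inl h
      · obtain ⟨i, hi, hA⟩ := Finset.mem_image.mp h
        exact Or.inr ⟨i, Finset.mem_range.mp hi, hA.symm⟩
    · rintro (rfl | ⟨i, hi, rfl⟩)
      · exact Finset.mem_insert_self _ _
      · exact Finset.mem_insert_of_mem (Finset.mem_image.mpr ⟨i, Finset.mem_range.mpr hi, rfl⟩)
  have hmemset : ∀ A, A ∈ Sfin ↔
      A ∈ ({0} ∪ {M | ∃ i < N, M = T ^ i} : Set (Matrix (Fin n) (Fin n) F)) := by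
    intro A
    rw [hmem]
    simp [Set.mem_union]
  have hadd : ∀ A ∈ Sfin, ∀ B ∈ Sfin, A + B ∈ Sfin := by
    intro A hA B hB
    exact (hmemset _).mpr ((hclosed A ((hmemset A).mp hA) B ((hmemset B).mp hB)).1)
  have hsmul : ∀ (k : ℕ), ∀ A ∈ Sfin, k • A ∈ Sfin := by
    intro k
    induction k with
    | zero => intro A _; simpa using (hmem (0 : Matrix (Fin n) (Fin n) F)).mpr (Or.inl rfl)
    | succ k ih =>
      intro A hA
      rw [succ_nsmul]
      exact hadd _ (ih A hA) _ hA
  have hneg : ∀ A ∈ Sfin, -A ∈ Sfin := by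
    intro A hA
    have hp : (ringChar F).Prime := CharP.char_is_prime F (ringChar F)
    have hcast : ((ringChar F : ℕ) : F) = 0 := CharP.cast_eq_zero F (ringChar F)
    have hpA : (ringChar F) • A = 0 := by
      ext i j
      simp [nsmul_eq_mul, hcast]
    have h1 : (ringChar F - 1) • A + A = 0 := by
      rw [← succ_nsmul, Nat.sub_add_cancel hp.one_lt.le]
      exact hpA
    have h2 : -A = (ringChar F - 1) • A := neg_eq_of_add_eq_zero_left h1
    rw [h2]
    exact hsmul _ A hA
  have hsub : ∀ A ∈ Sfin, ∀ B ∈ Sfin, A - B ∈ Sfin := by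
    intro A hA B hB
    rw [sub_eq_add_neg]
    exact hadd A hA _ (hneg B hB)
  have hinj : ∀ w : Fin n → F, w ≠ 0 → ∀ A ∈ Sfin, ∀ B ∈ Sfin,
      Matrix.vecMul w A = Matrix.vecMul w B → A = B := by
    intro w hw A hA B hB hAB
    have hD : A - B ∈ Sfin := hsub A hA B hB
    have hD0 : Matrix.vecMul w (A - B) = 0 := by
      rw [Matrix.vecMul_sub, hAB, sub_self]
    rcases (hmem _).mp hD with h | ⟨i, _, hTi⟩
    · exact sub_eq_zero.mp h
    · exact absurd (hvecMul_unit w i (by rw [← hTi]; exact hD0)) hw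
  have hpowinj : ∀ a < N, ∀ b < N, T ^ a = T ^ b → a = b := by
    intro a ha b hb hab
    exact pow_injOn_Iio_orderOf (by rw [Set.mem_Iio, hord]; exact ha)
      (by rw [Set.mem_Iio, hord]; exact hb) hab
  have h0not : (0 : Matrix (Fin n) (Fin n) F) ∉ (Finset.range N).image fun i => T ^ i := by
    intro h
    obtain ⟨i, _, hi⟩ := Finset.mem_image.mp h
    exact hpow_ne i hi
  have himginj : Set.InjOn (fun i => T ^ i) ↑(Finset.range N) := by
    intro a ha b hb hab
    exact hpowinj a (by simpa using ha) b (by simpa using hb) hab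
  have hcardS : Sfin.card = q ^ n := by
    rw [hSfin, Finset.card_insert_of_notMem h0not, Finset.card_image_of_injOn himginj,
      Finset.card_range]
    omega
  have hsurj : ∀ w : Fin n → F, w ≠ 0 → ∀ u : Fin n → F,
      ∃ A ∈ Sfin, Matrix.vecMul w A = u := by
    intro w hw u
    have hmapinj : Set.InjOn (fun A => Matrix.vecMul w A) (Sfin : Set (Matrix (Fin n) (Fin n) F)) := by
      intro A hA B hB hAB
      exact hinj w hw A (by simpa using hA) B (by simpa using hB) hAB
    have hcardimg : (Sfin.image fun A => Matrix.vecMul w A).card = Fintype.card (Fin n → F) := by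
      rw [Finset.card_image_of_injOn hmapinj, hcardS, Fintype.card_fun, Fintype.card_fin, hq]
    have huniv := Finset.eq_univ_of_card _ hcardimg
    have hu : u ∈ Sfin.image fun A => Matrix.vecMul w A := by
      rw [huniv]; exact Finset.mem_univ u
    obtain ⟨A, hA, hAu⟩ := Finset.mem_image.mp hu
    exact ⟨A, hA, hAu⟩
  set σ : ℕ → ℕ := fun i => (N - i) % N with hσ
  have hσlt : ∀ i, σ i < N := fun i => Nat.mod_lt _ hN0
  have hpowσ : ∀ i < N, T ^ i * T ^ σ i = 1 := by
    intro i hi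
    rcases Nat.eq_zero_or_pos i with rfl | hipos
    · simp [hσ, Nat.mod_self]
    · have h1 : σ i = N - i := by
        rw [hσ]; exact Nat.mod_eq_of_lt (by omega)
      rw [h1, ← pow_add, Nat.add_sub_cancel' (le_of_lt hi), hTN]
  have hσinj : ∀ a < N, ∀ b < N, σ a = σ b → a = b := by
    intro a ha b hb hab
    simp only [hσ] at hab
    rcases Nat.eq_zero_or_pos a with rfl | hapos <;>
      rcases Nat.eq_zero_or_pos b with rfl | hbpos
    · rfl
    · rw [Nat.sub_zero, Nat.mod_self, Nat.mod_eq_of_lt (by omega)] at hab; omega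
    · rw [Nat.mod_eq_of_lt (by omega), Nat.sub_zero, Nat.mod_self] at hab; omega
    · rw [Nat.mod_eq_of_lt (by omega), Nat.mod_eq_of_lt (by omega)] at hab; omega
  have hval : ∀ i : ℕ, i < N → ∀ y : Fin n → F, x = Matrix.vecMul y (T ^ i) →
      Matrix.vecMul x (T ^ σ i) = y := by
    intro i hi y hxy
    rw [hxy, Matrix.vecMul_vecMul, hpowσ i hi, Matrix.vecMul_one]
  have hfprop : ∀ i : ℕ, i < N → x ∈ innerCode T k₁ i →
      (∀ j : Fin n, k₁ ≤ (j : ℕ) → Matrix.vecMul x (T ^ σ i) j = 0) ∧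
        Matrix.vecMul x (T ^ σ i) ≠ 0 := by
    intro i hi hxi
    obtain ⟨y, hy, hxy⟩ := hxi
    rw [hval i hi y hxy]
    refine ⟨hy, ?_⟩
    intro h0
    apply hx
    rw [hxy, h0, Matrix.zero_vecMul]
  let f : {i : ℕ // i < N ∧ x ∈ innerCode T k₁ i} →
      {v : Fin n → F // (∀ j : Fin n, k₁ ≤ (j : ℕ) → v j = 0) ∧ v ≠ 0} :=
    fun i => ⟨Matrix.vecMul x (T ^ σ i.1), hfprop i.1 i.2.1 i.2.2⟩
  have hfbij : Function.Bijective f := by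
    constructor
    · rintro ⟨a, ha, hxa⟩ ⟨b, hb, hxb⟩ hab
      have h1 : Matrix.vecMul x (T ^ σ a) = Matrix.vecMul x (T ^ σ b) :=
        congrArg Subtype.val hab
      have h2 : T ^ σ a = T ^ σ b := by
        refine hinj x hx _ ?_ _ ?_ h1
        · exact (hmem _).mpr (Or.inr ⟨σ a, hσlt a, rfl⟩)
        · exact (hmem _).mpr (Or.inr ⟨σ b, hσlt b, rfl⟩)
      exact Subtype.ext (hσinj a ha b hb (hpowinj _ (hσlt a) _ (hσlt b) h2))
    · rintro ⟨v, hv, hv0⟩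
      obtain ⟨A, hA, hAx⟩ := hsurj v hv0 x
      have hA0 : A ≠ 0 := by
        intro h
        apply hx
        rw [← hAx, h, Matrix.vecMul_zero]
      obtain ⟨j, hj, rfl⟩ := ((hmem A).mp hA).resolve_left hA0
      refine ⟨⟨j, hj, ⟨v, hv, hAx.symm⟩⟩, ?_⟩
      exact Subtype.ext (hval j hj v hAx.symm)
  have h1 : Nat.card {i : ℕ // i < N ∧ x ∈ innerCode T k₁ i} =
      Nat.card {v : Fin n → F // (∀ j : Fin n, k₁ ≤ (j : ℕ) → v j = 0) ∧ v ≠ 0} :=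
    Nat.card_eq_of_bijective f hfbij
  have e : {v : Fin n → F // (∀ j : Fin n, k₁ ≤ (j : ℕ) → v j = 0) ∧ v ≠ 0} ≃
      {z : Fin k₁ → F // z ≠ 0} :=
    { toFun := fun v => ⟨fun i => v.1 ⟨i.1, lt_of_lt_of_le i.2 hk₁n⟩, by
        intro h0
        apply v.2.2
        funext j
        by_cases hj : (j : ℕ) < k₁
        · exact congrFun h0 ⟨j.1, hj⟩
        · exact v.2.1 j (le_of_not_gt hj)⟩
      invFun := fun z => ⟨fun j => if h : (j : ℕ) < k₁ then z.1 ⟨j.1, h⟩ else 0, by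
        constructor
        · intro j hj
          exact dif_neg (not_lt.mpr hj)
        · intro h0
          apply z.2
          funext i
          have h2 := congrFun h0 ⟨i.1, lt_of_lt_of_le i.2 hk₁n⟩
          simpa [i.2] using h2⟩
      left_inv := by
        intro v
        apply Subtype.ext
        funext j
        by_cases hj : (j : ℕ) < k₁
        · simp [hj]
        · simp only [dif_neg hj]
          exact (v.2.1 j (le_of_not_gt hj)).symm
      right_inv := by
        intro z
        apply Subtype.ext
        funext i
        simp [i.2] }
  have h2 : Nat.card {v : Fin n → F // (∀ j : Fin n, k₁ ≤ (j : ℕ) → v j = 0) ∧ v ≠ 0} =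
      q ^ k₁ - 1 := by
    rw [Nat.card_congr e, Nat.card_eq_fintype_card]
    have h3 : Fintype.card {z : Fin k₁ → F // ¬ z = 0} =
        Fintype.card (Fin k₁ → F) - Fintype.card {z : Fin k₁ → F // z = 0} :=
      Fintype.card_subtype_compl _
    have h4 : Fintype.card {z : Fin k₁ → F // z = 0} = 1 := Fintype.card_subtype_eq _
    have h5 : Fintype.card (Fin k₁ → F) = q ^ k₁ := by
      rw [Fintype.card_fun, Fintype.card_fin, hq]
    calc Fintype.card {z : Fin k₁ → F // z ≠ 0}
        = Fintype.card {z : Fin k₁ → F // ¬ z = 0} := by rfl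
      _ = q ^ k₁ - 1 := by rw [h3, h4, h5]
  rw [h1, h2]
end

section
/- Let T be an n×n invertible matrix over 𝔽_q with the properties above, and let k₁, k₂ satisfy 0 ≤ n−k₂ ≤ k₁ ≤ n. Define C₁^(i) as the row space of the first k₁ rows of T^i and C₂^(i) as the row space of the last k₂ rows of (T^{−i})^t. Then for every i, (C₂^(i))^⊥ ⊆ C₁^(i), i.e., each (C₁^(i), C₂^(i)) is a conjugate code pair. -/
/-!
Put `P = T^i` and `Q = (T⁻¹)^i`, so that `Q * P = 1`. For any `y`, the coordinates of `y ᵥ* Q`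
are the inner products of `y` with the rows of `Qᵀ`, and `(y ᵥ* Q) ᵥ* P = y` writes `y` as a
combination of the rows of `P` with exactly these coefficients. If `y` is orthogonal to the last
`k₂` rows of `Qᵀ`, only the first `n - k₂ ≤ k₁` rows of `P` occur.
-/

def dualCode {F : Type*} [CommRing F] {n : ℕ} (C : Submodule F (Fin n → F)) :
    Submodule F (Fin n → F) where
  carrier := {y | ∀ x ∈ C, dotProduct x y = 0}
  add_mem' := by
    intro y z hy hz x hx
    simp [dotProduct_add, hy x hx, hz x hx]
  zero_mem' := by
    intro x hx
    simp
  smul_mem' := by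
    intro c y hy x hx
    simp [dotProduct_smul, hy x hx]

/-- Row space of the first `k₁` rows of `T^i`. -/
def firstRowsCode {F : Type*} [Field F] {n : ℕ} (T : Matrix (Fin n) (Fin n) F)
    (k₁ : ℕ) (i : ℕ) : Submodule F (Fin n → F) :=
  Submodule.span F {r | ∃ j : Fin n, (j : ℕ) < k₁ ∧ r = (T ^ i) j}

/-- Row space of the last `k₂` rows of `(T⁻¹)^i` transposed. -/
def lastRowsCode {F : Type*} [Field F] {n : ℕ} (T : Matrix (Fin n) (Fin n) F)
    (k₂ : ℕ) (i : ℕ) : Submodule F (Fin n → F) :=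
  Submodule.span F {r | ∃ j : Fin n, n - k₂ ≤ (j : ℕ) ∧ r = (Matrix.transpose (T⁻¹ ^ i)) j}

open Matrix

theorem Matrix.vecMul_mem_span_rows {R ι κ : Type*} [Semiring R] [Fintype ι]
    (P : Matrix ι κ R) {p : ι → Prop} {c : ι → R} (hc : ∀ j, c j ≠ 0 → p j) :
    c ᵥ* P ∈ Submodule.span R {r | ∃ j, p j ∧ r = P j} := by
  rw [vecMul_eq_sum]
  refine Submodule.sum_mem _ fun j _ => ?_
  by_cases hj : c j = 0
  · simp [hj]
  · exact Submodule.smul_mem _ _ (Submodule.subset_span ⟨j, hc j hj, rfl⟩)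

theorem dualCode_span_transpose_rows_le_span_rows {R : Type*} [CommRing R] {n : ℕ}
    {P Q : Matrix (Fin n) (Fin n) R} (hQP : Q * P = 1) (p : Fin n → Prop) :
    dualCode (Submodule.span R {r | ∃ j, p j ∧ r = Qᵀ j}) ≤
      Submodule.span R {r | ∃ j, ¬ p j ∧ r = P j} := by
  intro y hy
  have hy_eq : (y ᵥ* Q) ᵥ* P = y := by rw [vecMul_vecMul, hQP, vecMul_one]
  rw [← hy_eq]
  refine P.vecMul_mem_span_rows fun j hne hj => hne ?_
  rw [← mulVec_transpose]
  exact hy _ (Submodule.subset_span ⟨j, hj, rfl⟩)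

theorem conjugate_pair_from_matrix_powers_general {F : Type*} [Field F]
    {n k₁ k₂ : ℕ} (hk : n - k₂ ≤ k₁)
    (T : Matrix (Fin n) (Fin n) F) (hT : IsUnit T) :
    ∀ i : ℕ, dualCode (lastRowsCode T k₂ i) ≤ firstRowsCode T k₁ i := by
  intro i
  have hQP : T⁻¹ ^ i * T ^ i = 1 := by
    rw [inv_pow', nonsing_inv_mul _ ((isUnit_iff_isUnit_det _).mp (hT.pow i))]
  refine (dualCode_span_transpose_rows_le_span_rows hQP _).trans (Submodule.span_mono ?_)
  rintro r ⟨j, hj, rfl⟩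
  exact ⟨j, by omega, rfl⟩

/-- With `T` as before and `0 ≤ n−k₂ ≤ k₁ ≤ n`, letting `C₁^(i)` be the
row space of the first `k₁` rows of `T^i` and `C₂^(i)` the row space of the last `k₂`
rows of `(T^{−i})ᵗ`, for every `i` we have `(C₂^(i))^⊥ ⊆ C₁^(i)`, i.e., each
`(C₁^(i), C₂^(i))` is a conjugate code pair. -/
theorem conjugate_pair_from_matrix_powers {F : Type*} [Field F] [Fintype F]
    {n k₁ k₂ : ℕ} (hk : n - k₂ ≤ k₁) (hk₁ : k₁ ≤ n) (hk₂ : k₂ ≤ n)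
    (T : Matrix (Fin n) (Fin n) F) (hT : IsUnit T)
    (hord : orderOf T = Fintype.card F ^ n - 1)
    (hclosed : ∀ A ∈ ({0} ∪ {M | ∃ i < Fintype.card F ^ n - 1, M = T ^ i} :
        Set (Matrix (Fin n) (Fin n) F)),
      ∀ B ∈ ({0} ∪ {M | ∃ i < Fintype.card F ^ n - 1, M = T ^ i} :
        Set (Matrix (Fin n) (Fin n) F)),
      A + B ∈ ({0} ∪ {M | ∃ i < Fintype.card F ^ n - 1, M = T ^ i} :
        Set (Matrix (Fin n) (Fin n) F)) ∧
      A * B ∈ ({0} ∪ {M | ∃ i < Fintype.card F ^ n - 1, M = T ^ i} :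
        Set (Matrix (Fin n) (Fin n) F))) :
    ∀ i : ℕ, dualCode (lastRowsCode T k₂ i) ≤ firstRowsCode T k₁ i :=
  conjugate_pair_from_matrix_powers_general hk T hT
end

section
/- Let {C₁^(i)}_i and {C₂^(i)}_i each be balanced ensembles over the same index set I of sizes q^{k₁} and q^{k₂} respectively, with (C₁^(i), C₂^(i)) conjugate pairs, and let the nonzero words of 𝔽_q^n be partitioned into m type classes T_Q. Then there exists an index i such that simultaneously for all type classes Q and both j ∈ {1,2}: |C_j^(i) ∩ T_Q| ≤ 2m·q^{k_j − n}·(q^n/(q^n−1))·|T_Q|. -/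
open Finset

section Markov
variable {ι 𝕜 : Type*} [Fintype ι] [Nonempty ι] [Field 𝕜] [LinearOrder 𝕜] [IsStrictOrderedRing 𝕜]

theorem mul_card_filter_lt_card_of_sum_le {f : ι → 𝕜} (hf : ∀ i, 0 ≤ f i) {a K : 𝕜}
    (hsum : ∑ i, f i ≤ Fintype.card ι * a) :
    K * #{i | K * a < f i} < Fintype.card ι := by
  have hι : (0 : 𝕜) < Fintype.card ι := by exact_mod_cast Fintype.card_pos
  rcases ({i | K * a < f i} : Finset ι).eq_empty_or_nonempty with hbad | ⟨i₀, hi₀bad⟩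
  · simpa [hbad] using hι
  have hi₀ : K * a < f i₀ := (mem_filter.mp hi₀bad).2
  have hfi₀ : f i₀ ≤ Fintype.card ι * a :=
    (single_le_sum (fun i _ => hf i) (mem_univ i₀)).trans hsum
  have ha : 0 < a := by
    refine lt_of_le_of_ne (nonneg_of_mul_nonneg_right ((hf i₀).trans hfi₀) hι) ?_
    rintro rfl
    simp only [mul_zero] at hi₀ hfi₀
    linarith
  have : K * #{i | K * a < f i} * a < Fintype.card ι * a := calc
    _ = ∑ i ∈ {i | K * a < f i}, K * a := by rw [sum_const, nsmul_eq_mul]; ring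
    _ < ∑ i ∈ {i | K * a < f i}, f i :=
      sum_lt_sum_of_nonempty ⟨i₀, hi₀bad⟩ fun i hi => (mem_filter.mp hi).2
    _ ≤ ∑ i, f i := sum_le_sum_of_subset_of_nonneg (subset_univ _) fun i _ _ => hf i
    _ ≤ Fintype.card ι * a := hsum
  exact lt_of_mul_lt_mul_right this ha.le

theorem exists_forall_le_card_mul_of_sum_le {κ : Type*} [Fintype κ] {f : κ → ι → 𝕜}
    (hf : ∀ j i, 0 ≤ f j i) {a : κ → 𝕜} (hsum : ∀ j, ∑ i, f j i ≤ Fintype.card ι * a j) :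
    ∃ i, ∀ j, f j i ≤ Fintype.card κ * a j := by
  classical
  rcases isEmpty_or_nonempty κ with hκ | hκ
  · exact ⟨Classical.arbitrary ι, fun j => isEmptyElim j⟩
  by_contra! hbad
  set K : 𝕜 := (Fintype.card κ : 𝕜)
  have hcover : (Fintype.card ι : 𝕜) ≤ ∑ j, (#{i | K * a j < f j i} : 𝕜) := by
    have : univ ⊆ univ.biUnion fun j => ({i | K * a j < f j i} : Finset ι) := fun i _ => by
      obtain ⟨j, hj⟩ := hbad i
      exact mem_biUnion.mpr ⟨j, mem_univ j, by simpa using hj⟩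
    exact_mod_cast (card_le_card this).trans card_biUnion_le
  have : K * Fintype.card ι < K * Fintype.card ι := calc
    _ ≤ ∑ j, K * #{i | K * a j < f j i} := by rw [← mul_sum]; gcongr
    _ < ∑ _j : κ, (Fintype.card ι : 𝕜) :=
      sum_lt_sum_of_nonempty univ_nonempty fun j _ =>
        mul_card_filter_lt_card_of_sum_le (hf j) (hsum j)
    _ = K * Fintype.card ι := by simp [K]
  exact this.false

end Markov

section DoubleCounting
variable {ι β : Type*} [Fintype ι] [Fintype β]

theorem sum_natCard_inter_eq (S : ι → Set β) (T : Set β) {V : ℕ}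
    (hbal : ∀ x ∈ T, Nat.card {i // x ∈ S i} = V) :
    ∑ i, Nat.card {x // x ∈ T ∧ x ∈ S i} = Nat.card T * V := by
  classical
  have h := sum_card_bipartiteAbove_eq_sum_card_bipartiteBelow (s := univ)
    (t := {x | x ∈ T}) (r := fun i x => x ∈ S i)
  simp only [bipartiteAbove, bipartiteBelow, filter_filter] at h
  simp only [Nat.card_eq_fintype_card, Fintype.card_subtype] at hbal ⊢
  rw [h, sum_congr rfl fun x hx => hbal x (mem_filter.mp hx).2, sum_const, smul_eq_mul]

variable {S : ι → Set β} {z : β} {c V : ℕ}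

theorem card_sub_one_mul_eq_card_mul (hz : ∀ i, z ∈ S i) (hcard : ∀ i, Nat.card (S i) = c)
    (hbal : ∀ x, x ≠ z → Nat.card {i // x ∈ S i} = V) :
    (Fintype.card β - 1) * V = Fintype.card ι * (c - 1) := by
  have hcompl : Nat.card ({z}ᶜ : Set β) = Fintype.card β - 1 := by
    rw [Nat.card_coe_set_eq, Set.ncard_compl]; simp [Nat.card_eq_fintype_card]
  have hinter (i : ι) : Nat.card {x // x ∈ ({z}ᶜ : Set β) ∧ x ∈ S i} = c - 1 := by
    rw [← hcard i, Nat.card_coe_set_eq, ← Set.ncard_sdiff_singleton_of_mem (hz i),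
      ← Nat.card_coe_set_eq]
    exact Nat.card_congr (Equiv.subtypeEquivRight fun x => by simp [and_comm])
  have h := sum_natCard_inter_eq S {z}ᶜ fun x hx => hbal x hx
  rwa [sum_congr rfl fun i _ => hinter i, sum_const, card_univ, smul_eq_mul, hcompl,
    eq_comm] at h

theorem sum_natCard_inter_le (hz : ∀ i, z ∈ S i) (hcard : ∀ i, Nat.card (S i) = c)
    (hbal : ∀ x, x ≠ z → Nat.card {i // x ∈ S i} = V) {T : Set β} (hT : z ∉ T) :
    ∑ i, (Nat.card {x // x ∈ T ∧ x ∈ S i} : ℚ) ≤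
      Fintype.card ι * (c / (Fintype.card β - 1) * Nat.card T) := by
  rcases T.eq_empty_or_nonempty with rfl | ⟨x, hx⟩
  · simp
  have hβ : 1 < Fintype.card β := Fintype.one_lt_card_iff.mpr ⟨x, z, ne_of_mem_of_not_mem hx hT⟩
  have hV : (V : ℚ) ≤ Fintype.card ι * c / (Fintype.card β - 1) := by
    have h := card_sub_one_mul_eq_card_mul hz hcard hbal
    have : (Fintype.card β - 1) * V ≤ Fintype.card ι * c :=
      h.trans_le (Nat.mul_le_mul_left _ (Nat.sub_le c 1))
    rw [le_div_iff₀ (by rw [sub_pos]; exact_mod_cast hβ), mul_comm]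
    have := (Nat.cast_le (α := ℚ)).mpr this
    push_cast [hβ.le] at this
    exact this
  calc ∑ i, (Nat.card {x // x ∈ T ∧ x ∈ S i} : ℚ) = Nat.card T * V := by
        exact_mod_cast sum_natCard_inter_eq S T fun x hx => hbal x (ne_of_mem_of_not_mem hx hT)
    _ ≤ Nat.card T * (Fintype.card ι * c / (Fintype.card β - 1)) := by gcongr
    _ = Fintype.card ι * (c / (Fintype.card β - 1) * Nat.card T) := by ring

theorem sum_natCard_inter_submodule_le {R : Type*} [Semiring R] [Fintype R] {n k : ℕ}
    (C : ι → Submodule R (Fin n → R)) (hdim : ∀ i, Nat.card (C i) = Fintype.card R ^ k)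
    (hbal : ∀ x : Fin n → R, x ≠ 0 → Nat.card {i // x ∈ C i} = V)
    {T : Set (Fin n → R)} (hT : 0 ∉ T) :
    ∑ i, (Nat.card {x // x ∈ T ∧ x ∈ C i} : ℚ) ≤ Fintype.card ι *
      ((Fintype.card R : ℚ) ^ k / (Fintype.card R : ℚ) ^ n *
        ((Fintype.card R : ℚ) ^ n / ((Fintype.card R : ℚ) ^ n - 1)) * Nat.card T) := by
  have hq : (Fintype.card R : ℚ) ^ n ≠ 0 := by positivity
  have h := sum_natCard_inter_le (S := fun i => (C i : Set (Fin n → R)))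
    (fun i => (C i).zero_mem) hdim hbal hT
  simpa [div_mul_div_cancel₀ hq] using h

end DoubleCounting

theorem exists_good_conjugate_pair_in_balanced_ensemble_general {F : Type*} [Field F] [Fintype F]
    {n k₁ k₂ : ℕ} {I : Type*} [Fintype I] [Nonempty I]
    (C₁ C₂ : I → Submodule F (Fin n → F))
    (hdim₁ : ∀ i, Nat.card (C₁ i) = Fintype.card F ^ k₁)
    (hdim₂ : ∀ i, Nat.card (C₂ i) = Fintype.card F ^ k₂)
    (V₁ V₂ : ℕ)
    (hbal₁ : ∀ x : Fin n → F, x ≠ 0 → Nat.card {i : I // x ∈ C₁ i} = V₁)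
    (hbal₂ : ∀ x : Fin n → F, x ≠ 0 → Nat.card {i : I // x ∈ C₂ i} = V₂)
    {m : ℕ} (T : Fin m → Set (Fin n → F))
    (hcover : (⋃ Q, T Q) = {x : Fin n → F | x ≠ 0}) :
    ∃ i : I, ∀ Q : Fin m,
      (Nat.card {x : Fin n → F // x ∈ T Q ∧ x ∈ C₁ i} : ℚ) ≤
        2 * m * ((Fintype.card F : ℚ) ^ k₁ / (Fintype.card F : ℚ) ^ n) *
          ((Fintype.card F : ℚ) ^ n / ((Fintype.card F : ℚ) ^ n - 1)) *
          (Nat.card (T Q) : ℚ) ∧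
      (Nat.card {x : Fin n → F // x ∈ T Q ∧ x ∈ C₂ i} : ℚ) ≤
        2 * m * ((Fintype.card F : ℚ) ^ k₂ / (Fintype.card F : ℚ) ^ n) *
          ((Fintype.card F : ℚ) ^ n / ((Fintype.card F : ℚ) ^ n - 1)) *
          (Nat.card (T Q) : ℚ) := by
  have hT (Q : Fin m) : (0 : Fin n → F) ∉ T Q := fun h =>
    (hcover ▸ Set.mem_iUnion_of_mem Q h : (0 : Fin n → F) ∈ {x | x ≠ 0}) rfl
  let bound (k : ℕ) (Q : Fin m) : ℚ := (Fintype.card F : ℚ) ^ k / (Fintype.card F : ℚ) ^ n *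
    ((Fintype.card F : ℚ) ^ n / ((Fintype.card F : ℚ) ^ n - 1)) * Nat.card (T Q)
  obtain ⟨i, hi⟩ := exists_forall_le_card_mul_of_sum_le (κ := Fin m ⊕ Fin m)
    (f := Sum.elim (fun Q i => (Nat.card {x // x ∈ T Q ∧ x ∈ C₁ i} : ℚ))
      fun Q i => (Nat.card {x // x ∈ T Q ∧ x ∈ C₂ i} : ℚ))
    (a := Sum.elim (bound k₁) (bound k₂))
    (by rintro (Q | Q) i <;> exact Nat.cast_nonneg _)
    (by rintro (Q | Q)
        exacts [sum_natCard_inter_submodule_le C₁ hdim₁ hbal₁ (hT Q),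
          sum_natCard_inter_submodule_le C₂ hdim₂ hbal₂ (hT Q)])
  refine ⟨i, fun Q => ⟨(hi (.inl Q)).trans_eq ?_, (hi (.inr Q)).trans_eq ?_⟩⟩ <;>
  · simp only [bound, Fintype.card_sum, Fintype.card_fin, Sum.elim_inl, Sum.elim_inr]
    push_cast
    ring

/-- Given two balanced ensembles `{C₁^(i)}` and `{C₂^(i)}` over the same
index set, of sizes `q^{k₁}` and `q^{k₂}` respectively, forming conjugate pairs, and a
partition of the nonzero words into `m` type classes `T_Q`, there exists an index `i`
such that simultaneously for all type classes `Q` and both `j ∈ {1,2}`: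
`|C_j^(i) ∩ T_Q| ≤ 2m q^{k_j − n} (q^n/(q^n−1)) |T_Q|`. -/
theorem exists_good_conjugate_pair_in_balanced_ensemble {F : Type*} [Field F] [Fintype F]
    {n k₁ k₂ : ℕ} {I : Type*} [Fintype I] [Nonempty I]
    (C₁ C₂ : I → Submodule F (Fin n → F))
    (hconj : ∀ i, dualCode (C₂ i) ≤ C₁ i)
    (hdim₁ : ∀ i, Nat.card (C₁ i) = Fintype.card F ^ k₁)
    (hdim₂ : ∀ i, Nat.card (C₂ i) = Fintype.card F ^ k₂)
    (V₁ V₂ : ℕ)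
    (hbal₁ : ∀ x : Fin n → F, x ≠ 0 → Nat.card {i : I // x ∈ C₁ i} = V₁)
    (hbal₂ : ∀ x : Fin n → F, x ≠ 0 → Nat.card {i : I // x ∈ C₂ i} = V₂)
    {m : ℕ} (T : Fin m → Set (Fin n → F))
    (hdisj : ∀ Q Q', Q ≠ Q' → Disjoint (T Q) (T Q'))
    (hcover : (⋃ Q, T Q) = {x : Fin n → F | x ≠ 0}) :
    ∃ i : I, ∀ Q : Fin m,
      (Nat.card {x : Fin n → F // x ∈ T Q ∧ x ∈ C₁ i} : ℚ) ≤
        2 * m * ((Fintype.card F : ℚ) ^ k₁ / (Fintype.card F : ℚ) ^ n) *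
          ((Fintype.card F : ℚ) ^ n / ((Fintype.card F : ℚ) ^ n - 1)) *
          (Nat.card (T Q) : ℚ) ∧
      (Nat.card {x : Fin n → F // x ∈ T Q ∧ x ∈ C₂ i} : ℚ) ≤
        2 * m * ((Fintype.card F : ℚ) ^ k₂ / (Fintype.card F : ℚ) ^ n) *
          ((Fintype.card F : ℚ) ^ n / ((Fintype.card F : ℚ) ^ n - 1)) *
          (Nat.card (T Q) : ℚ) :=
  exists_good_conjugate_pair_in_balanced_ensemble_general C₁ C₂ hdim₁ hdim₂ V₁ V₂ hbal₁ hbal₂ T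
    hcover
end
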